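/- arXiv:1608.03429 — 7 statements merged into one kernel-verified Lean document; each statement's English description precedes it below -/
import Mathlib

section
/- For every real η > 0 and every integer i ≥ 1, the tail sum Σ_{j=i}^∞ P_η(j) converges and equals (343/30)·√(14/π) · Γ(i + 3.5) · η^i / (i! · (η + 3.5)^(i + 3.5)) · Σ_{n=0}^∞ [Γ(i + 3.5 + n) · i! / (Γ(i + 3.5) · (i + n)!)] · (η/(η + 3.5))^n, where the series on the right (the Gauss hypergeometric series ₂F₁(1, i+3.5; i+1; η/(η+3.5))) converges absolutely. Consequently, for h ∈ [0,1], the quantity p = (Σ_{j=i}^∞ P_η(j)) · (1 − h)^(i−1) · h equals the closed form (343/30)·√(14/π) · Γ(i+3.5) · η^i · ₂F₁(1, i+3.5; i+1; η/(η+3.5)) / (i! · (η+3.5)^(i+3.5)) · (1 − h)^(i−1) · h. -/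
open Real

/-- `Pcell η j` : probability that a typical Poisson–Voronoi cell contains exactly `j`
D2D helpers, with density ratio `η = λ_d / λ_m`. -/
noncomputable def Pcell (η : ℝ) (j : ℕ) : ℝ :=
  (3.5 : ℝ) ^ (3.5 : ℝ) * Real.Gamma ((j : ℝ) + 3.5) * η ^ j /
    (Real.Gamma 3.5 * (Nat.factorial j : ℝ) * (η + 3.5) ^ ((j : ℝ) + 3.5))

/-- Term of the Gauss hypergeometric series `₂F₁(1, i+3.5; i+1; η/(η+3.5))`. -/
noncomputable def hypTerm (η : ℝ) (i : ℕ) (n : ℕ) : ℝ :=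
  (Real.Gamma ((i : ℝ) + 3.5 + n) * (Nat.factorial i : ℝ) /
      (Real.Gamma ((i : ℝ) + 3.5) * (Nat.factorial (i + n) : ℝ))) *
    (η / (η + 3.5)) ^ n

lemma hypTerm_pos {η : ℝ} (hη : 0 < η) (i n : ℕ) : 0 < hypTerm η i n := by
  have h1 : (0:ℝ) < (i:ℝ) + 3.5 + n := by positivity
  have h2 : (0:ℝ) < (i:ℝ) + 3.5 := by positivity
  have h3 : (0:ℝ) < η + 3.5 := by linarith
  have := Real.Gamma_pos_of_pos h1
  have := Real.Gamma_pos_of_pos h2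
  have f1 : (0:ℝ) < (Nat.factorial i : ℝ) := by exact_mod_cast Nat.factorial_pos i
  have f2 : (0:ℝ) < (Nat.factorial (i+n) : ℝ) := by exact_mod_cast Nat.factorial_pos (i+n)
  unfold hypTerm
  positivity

lemma hypTerm_succ {η : ℝ} (hη : 0 < η) (i n : ℕ) :
    hypTerm η i (n+1) =
      (((i:ℝ) + n + 3.5) / ((i:ℝ) + n + 1)) * (η / (η + 3.5)) * hypTerm η i n := by
  have hG2 : (0:ℝ) < (i:ℝ) + 3.5 := by positivity
  have hGpos : (0:ℝ) < Real.Gamma ((i:ℝ) + 3.5) := Real.Gamma_pos_of_pos hG2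
  have hGn : Real.Gamma ((i:ℝ) + 3.5 + (n+1:ℕ)) =
      ((i:ℝ) + 3.5 + n) * Real.Gamma ((i:ℝ) + 3.5 + n) := by
    have : ((i:ℝ) + 3.5 + (n+1:ℕ)) = ((i:ℝ) + 3.5 + n) + 1 := by push_cast; ring
    rw [this, Real.Gamma_add_one (by positivity)]
  have hfac : (Nat.factorial (i + (n+1)) : ℝ) =
      ((i:ℝ) + n + 1) * (Nat.factorial (i + n) : ℝ) := by
    have : i + (n+1) = (i + n) + 1 := by ring
    rw [this, Nat.factorial_succ]
    push_cast; ring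
  have hfacpos : (0:ℝ) < (Nat.factorial (i+n) : ℝ) := by exact_mod_cast Nat.factorial_pos (i+n)
  unfold hypTerm
  rw [hGn, hfac, pow_succ]
  have h1 : ((i:ℝ) + n + 1) ≠ 0 := by positivity
  field_simp
  ring

lemma gamma35 : Real.Gamma 3.5 = 15 / 8 * Real.sqrt Real.pi := by
  have h05 : Real.Gamma 0.5 = Real.sqrt Real.pi := by
    rw [show (0.5:ℝ) = 1/2 by norm_num, Real.Gamma_one_half_eq]
  have h15 : Real.Gamma 1.5 = 0.5 * Real.Gamma 0.5 := by
    rw [show (1.5:ℝ) = 0.5 + 1 by norm_num, Real.Gamma_add_one (by norm_num)]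
  have h25 : Real.Gamma 2.5 = 1.5 * Real.Gamma 1.5 := by
    rw [show (2.5:ℝ) = 1.5 + 1 by norm_num, Real.Gamma_add_one (by norm_num)]
  have h35 : Real.Gamma 3.5 = 2.5 * Real.Gamma 2.5 := by
    rw [show (3.5:ℝ) = 2.5 + 1 by norm_num, Real.Gamma_add_one (by norm_num)]
  rw [h35, h25, h15, h05]; ring

lemma const_eq : (3.5:ℝ) ^ (3.5:ℝ) / Real.Gamma 3.5 =
    (343 / 30) * Real.sqrt (14 / Real.pi) := by
  have h1 : (3.5:ℝ) ^ (3.5:ℝ) = 343 / 8 * Real.sqrt 3.5 := by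
    rw [show (3.5:ℝ) = (3:ℕ) + (1/2 : ℝ) by norm_num]
    rw [Real.rpow_add (by norm_num), Real.rpow_natCast, ← Real.sqrt_eq_rpow]
    norm_num
  have h2 : Real.sqrt 14 = 2 * Real.sqrt 3.5 := by
    rw [show (14:ℝ) = 4 * 3.5 by norm_num, Real.sqrt_mul (by norm_num),
      show (4:ℝ) = 2^2 by norm_num, Real.sqrt_sq (by norm_num)]
  have h3 : Real.sqrt (14 / Real.pi) = Real.sqrt 14 / Real.sqrt Real.pi :=
    Real.sqrt_div (by norm_num) Real.pi
  have hπ : (0:ℝ) < Real.sqrt Real.pi := Real.sqrt_pos.mpr Real.pi_pos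
  rw [h1, gamma35, h3, h2]
  field_simp
  ring

lemma pcell_eq {η : ℝ} (hη : 0 < η) (i n : ℕ) :
    Pcell η (i + n) =
      ((3.5:ℝ) ^ (3.5:ℝ) * Real.Gamma ((i:ℝ) + 3.5) * η ^ i /
        (Real.Gamma 3.5 * (Nat.factorial i : ℝ) * (η + 3.5) ^ ((i:ℝ) + 3.5))) *
      hypTerm η i n := by
  have hη35 : (0:ℝ) < η + 3.5 := by linarith
  have hrpow : (η + 3.5) ^ (((i + n : ℕ) : ℝ) + 3.5) =
      (η + 3.5) ^ ((i:ℝ) + 3.5) * (η + 3.5) ^ n := by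
    rw [← Real.rpow_natCast (η + 3.5) n, ← Real.rpow_add hη35]
    push_cast; ring_nf
  have hcast : ((i + n : ℕ) : ℝ) + 3.5 = (i:ℝ) + 3.5 + n := by push_cast; ring
  have hGpos : (0:ℝ) < Real.Gamma ((i:ℝ) + 3.5) := Real.Gamma_pos_of_pos (by positivity)
  have hG35 : (0:ℝ) < Real.Gamma 3.5 := Real.Gamma_pos_of_pos (by norm_num)
  have hf1 : (0:ℝ) < (Nat.factorial i : ℝ) := by exact_mod_cast Nat.factorial_pos i
  have hf2 : (0:ℝ) < (Nat.factorial (i+n) : ℝ) := by exact_mod_cast Nat.factorial_pos (i+n)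
  have hr1 : (0:ℝ) < (η + 3.5) ^ ((i:ℝ) + 3.5) := Real.rpow_pos_of_pos hη35 _
  unfold Pcell hypTerm
  rw [hrpow, hcast, pow_add, div_pow]
  field_simp

theorem stmt_0 (η : ℝ) (hη : 0 < η) (i : ℕ) (hi : 1 ≤ i) :
    ∃ F : ℝ,
      Summable (fun n : ℕ => |hypTerm η i n|) ∧
      HasSum (fun n : ℕ => hypTerm η i n) F ∧
      HasSum (fun n : ℕ => Pcell η (i + n))
        ((343 / 30) * Real.sqrt (14 / Real.pi) *
          (Real.Gamma ((i : ℝ) + 3.5) * η ^ i * F) /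
          ((Nat.factorial i : ℝ) * (η + 3.5) ^ ((i : ℝ) + 3.5))) ∧
      ∀ h : ℝ, 0 ≤ h → h ≤ 1 →
        (∑' n : ℕ, Pcell η (i + n)) * (1 - h) ^ (i - 1) * h =
          (343 / 30) * Real.sqrt (14 / Real.pi) *
            (Real.Gamma ((i : ℝ) + 3.5) * η ^ i * F) /
            ((Nat.factorial i : ℝ) * (η + 3.5) ^ ((i : ℝ) + 3.5)) *
          (1 - h) ^ (i - 1) * h := by
  have hη35 : (0:ℝ) < η + 3.5 := by linarith
  set x : ℝ := η / (η + 3.5) with hxdef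
  have hx0 : 0 < x := div_pos hη hη35
  have hx1 : x < 1 := (div_lt_one hη35).mpr (by linarith)
  set r : ℝ := (1 + x) / 2 with hrdef
  have hr1 : r < 1 := by rw [hrdef]; linarith
  -- summability of the hypergeometric series via the ratio test
  have hsum : Summable (fun n : ℕ => hypTerm η i n) := by
    apply summable_of_ratio_norm_eventually_le hr1
    obtain ⟨N, hNle⟩ := exists_nat_ge (7 / (1 - x))
    have h1x : (0:ℝ) < 1 - x := by linarith
    filter_upwards [Filter.eventually_ge_atTop N] with n hn
    have h7 : (7:ℝ) ≤ (1 - x) * n := by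
      have : (7:ℝ) / (1 - x) ≤ n := le_trans hNle (by exact_mod_cast hn)
      rw [div_le_iff₀ h1x] at this; linarith
    have hd : (0:ℝ) < (i:ℝ) + n + 1 := by positivity
    have key : ((i:ℝ) + n + 3.5) / ((i:ℝ) + n + 1) * x ≤ r := by
      rw [div_mul_eq_mul_div, div_le_iff₀ hd, hrdef]
      nlinarith [hx0.le, hx1.le]
    have hpos := hypTerm_pos hη i n
    have hfpos : (0:ℝ) < ((i:ℝ) + n + 3.5) / ((i:ℝ) + n + 1) * x :=
      mul_pos (div_pos (by positivity) hd) hx0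
    rw [hypTerm_succ hη, Real.norm_eq_abs, Real.norm_eq_abs,
      abs_of_pos (mul_pos hfpos hpos), abs_of_pos hpos]
    exact mul_le_mul_of_nonneg_right key hpos.le
  set F : ℝ := ∑' n : ℕ, hypTerm η i n with hFdef
  have hF : HasSum (fun n : ℕ => hypTerm η i n) F := hsum.hasSum
  -- the constant
  set K : ℝ := (3.5:ℝ) ^ (3.5:ℝ) * Real.Gamma ((i:ℝ) + 3.5) * η ^ i /
      (Real.Gamma 3.5 * (Nat.factorial i : ℝ) * (η + 3.5) ^ ((i:ℝ) + 3.5)) with hKdef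
  have hG35 : (0:ℝ) < Real.Gamma 3.5 := Real.Gamma_pos_of_pos (by norm_num)
  have hc : (3.5:ℝ) ^ (3.5:ℝ) = (343 / 30) * Real.sqrt (14 / Real.pi) * Real.Gamma 3.5 := by
    rw [← const_eq]; field_simp
  have hKeq : K * F = (343 / 30) * Real.sqrt (14 / Real.pi) *
      (Real.Gamma ((i:ℝ) + 3.5) * η ^ i * F) /
      ((Nat.factorial i : ℝ) * (η + 3.5) ^ ((i:ℝ) + 3.5)) := by
    rw [hKdef, hc]
    have hf1 : ((Nat.factorial i : ℝ)) ≠ 0 := by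
      exact_mod_cast (Nat.factorial_pos i).ne'
    have hr1' : ((η + 3.5) ^ ((i:ℝ) + 3.5)) ≠ 0 := (Real.rpow_pos_of_pos hη35 _).ne'
    field_simp
  have hP : HasSum (fun n : ℕ => Pcell η (i + n))
      ((343 / 30) * Real.sqrt (14 / Real.pi) *
        (Real.Gamma ((i:ℝ) + 3.5) * η ^ i * F) /
        ((Nat.factorial i : ℝ) * (η + 3.5) ^ ((i:ℝ) + 3.5))) := by
    rw [← hKeq]
    have heq : (fun n : ℕ => Pcell η (i + n)) = fun n : ℕ => K * hypTerm η i n :=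
      funext fun n => by rw [pcell_eq hη i n, ← hKdef]
    rw [heq]
    exact hF.mul_left K
  refine ⟨F, hsum.abs, hF, hP, ?_⟩
  intro h _ _
  rw [hP.tsum_eq]
end

section
/- Let p : ℕ → ℝ be a summable sequence with total sum S = Σ_{m=0}^∞ p(m), let k ≥ 1 be an integer, and set T = Σ_{m=k+1}^∞ p(m). Then Σ_{i=1}^k [ T/k + Σ_{j=0}^{k−i} p(i+j)/(i+j) ] = S − p(0). -/
theorem stmt_1 (p : ℕ → ℝ) (hp : Summable p) (k : ℕ) (hk : 1 ≤ k) :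
    ∑ i ∈ Finset.Icc 1 k,
        ((∑' m : ℕ, p (m + (k + 1))) / (k : ℝ) +
          ∑ j ∈ Finset.range (k - i + 1), p (i + j) / ((i + j : ℕ) : ℝ)) =
      (∑' m : ℕ, p m) - p 0 := by
  set T : ℝ := ∑' m : ℕ, p (m + (k + 1)) with hT
  have hk0 : (k : ℝ) ≠ 0 := by positivity
  rw [Finset.sum_add_distrib, Finset.sum_const, Nat.card_Icc]
  have h1 : (k + 1 - 1) • (T / (k : ℝ)) = T := by
    simp [nsmul_eq_mul]
    field_simp
  rw [h1]
  have h2 : ∀ i ∈ Finset.Icc 1 k,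
      (∑ j ∈ Finset.range (k - i + 1), p (i + j) / ((i + j : ℕ) : ℝ)) =
      ∑ n ∈ Finset.Icc i k, p n / (n : ℝ) := by
    intro i hi
    rw [Finset.mem_Icc] at hi
    rw [← Finset.Ico_add_one_right_eq_Icc, Finset.sum_Ico_eq_sum_range]
    have : k + 1 - i = k - i + 1 := by omega
    rw [this]
  rw [Finset.sum_congr rfl h2]
  have h3 : ∑ i ∈ Finset.Icc 1 k, ∑ n ∈ Finset.Icc i k, p n / (n : ℝ)
      = ∑ n ∈ Finset.Icc 1 k, p n := by
    simp_rw [← Finset.Ico_add_one_right_eq_Icc]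
    rw [Finset.sum_Ico_Ico_comm]
    refine Finset.sum_congr rfl ?_
    intro n hn
    rw [Finset.mem_Ico] at hn
    rw [Finset.sum_const, Nat.card_Ico, nsmul_eq_mul]
    have hn1 : (n : ℝ) ≠ 0 := by
      have : 1 ≤ n := hn.1
      positivity
    push_cast [Nat.sub_zero]
    field_simp
  rw [h3]
  have h4 : (∑' m : ℕ, p m) = (∑ i ∈ Finset.range (k + 1), p i) + T := by
    rw [hT, Summable.sum_add_tsum_nat_add (k + 1) hp]
  rw [h4]
  have h5 : ∑ i ∈ Finset.range (k + 1), p i = p 0 + ∑ n ∈ Finset.Icc 1 k, p n := by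
    rw [← Finset.Ico_add_one_right_eq_Icc, Finset.range_eq_Ico,
      ← Finset.sum_eq_sum_Ico_succ_bot (by omega)]
  rw [h5]
  ring
end

section
/- For every real η > 0, every integer k ≥ 1 and every real h, one has h · Σ_{i=1}^k [ (1/k) · Σ_{j=k+1}^∞ P_η(j) + Σ_{j=0}^{k−i} P_η(i+j)/(i+j) ] = h · (1 − (1 + η/3.5)^(−3.5)). In particular the left-hand side does not depend on k. -/
open Real Finset Polynomial Nat

theorem Real.Gamma_add_nat_eq_ascPochhammer_mul {a : ℝ} (ha : ∀ k : ℕ, a ≠ -k) (n : ℕ) :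
    Gamma (a + n) = (ascPochhammer ℝ n).eval a * Gamma a := by
  induction n with
  | zero => simp
  | succ n ih =>
    have hne : a + n ≠ 0 := fun h => ha n (by linarith)
    rw [Nat.cast_succ, ← add_assoc, Gamma_add_one hne, ih, ascPochhammer_succ_eval]
    ring

theorem Real.Gamma_add_nat_div_eq_choose {a : ℝ} (ha : ∀ k : ℕ, a ≠ -k) (n : ℕ) :
    Gamma (a + n) / (Gamma a * n !) = Ring.choose (a + n - 1) n := by
  have hΓ : Gamma a ≠ 0 := Gamma_ne_zero fun m h => ha m h
  have hfac := Ring.factorial_nsmul_multichoose_eq_ascPochhammer a n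
  rw [ascPochhammer_smeval_eq_eval, nsmul_eq_mul, Ring.multichoose_eq] at hfac
  rw [Gamma_add_nat_eq_ascPochhammer_mul ha, ← hfac]
  field_simp

theorem Real.hasSum_choose_mul_pow {x : ℝ} (hx : |x| < 1) (a : ℝ) :
    HasSum (fun n : ℕ => Ring.choose (a + n - 1) n * x ^ n) ((1 - x) ^ (-a)) := by
  have hx' : x ∈ Metric.eball (0 : ℝ) 1 := by
    simpa [Real.enorm_eq_ofReal_abs] using hx
  have := (one_div_one_sub_rpow_hasFPowerSeriesOnBall_zero a).hasSum hx'
  rw [FormalMultilinearSeries.ofScalars_apply_eq'] at this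
  have h1x : 0 ≤ 1 - x := by linarith [le_abs_self x]
  simpa [rpow_neg h1x] using this

theorem Real.hasSum_choose_mul_pow_mul_one_sub_rpow {p : ℝ} (hp : |p| < 1) (a : ℝ) :
    HasSum (fun n : ℕ => Ring.choose (a + n - 1) n * p ^ n * (1 - p) ^ a) 1 := by
  have h1p : 0 < 1 - p := by linarith [le_abs_self p]
  have := (hasSum_choose_mul_pow hp a).mul_right ((1 - p) ^ a)
  rwa [← rpow_add h1p, neg_add_cancel, rpow_zero] at this

lemma Pcell_eq_choose_mul {η : ℝ} (hη : 0 < η) (j : ℕ) :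
    Pcell η j = Ring.choose ((3.5 : ℝ) + j - 1) j * (η / (η + 3.5)) ^ j *
      (1 - η / (η + 3.5)) ^ (3.5 : ℝ) := by
  have hpos : (0 : ℝ) < η + 3.5 := by linarith
  have hq : 1 - η / (η + 3.5) = 3.5 / (η + 3.5) := by field_simp; ring
  rw [← Gamma_add_nat_div_eq_choose (fun k => by linarith [k.cast_nonneg (α := ℝ)]) j, hq,
    div_rpow (by norm_num) hpos.le, Pcell, add_comm (j : ℝ), rpow_add hpos, rpow_natCast, div_pow]
  field_simp

lemma hasSum_Pcell {η : ℝ} (hη : 0 < η) : HasSum (Pcell η) 1 := by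
  have hp : |η / (η + 3.5)| < 1 := by
    rw [abs_of_pos (by positivity), div_lt_one (by linarith)]
    linarith
  convert hasSum_choose_mul_pow_mul_one_sub_rpow hp 3.5 using 1
  exact funext (Pcell_eq_choose_mul hη)

lemma Pcell_zero {η : ℝ} (hη : 0 < η) : Pcell η 0 = (1 + η / 3.5) ^ (-(3.5 : ℝ)) := by
  have hpos : (0 : ℝ) < η + 3.5 := by linarith
  have hΓ : Gamma 3.5 ≠ 0 := (Gamma_pos_of_pos (by norm_num)).ne'
  rw [rpow_neg (by positivity), ← inv_rpow (by positivity), Pcell]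
  simp only [Nat.cast_zero, zero_add, pow_zero, factorial_zero, cast_one, mul_one]
  rw [mul_comm (Gamma 3.5), mul_div_mul_right _ _ hΓ, ← div_rpow (by norm_num) hpos.le]
  congr 1
  field_simp
  ring

theorem sum_Icc_sum_range_div_eq {K : Type*} [Field K] [CharZero K] (f : ℕ → K) (k : ℕ) :
    ∑ i ∈ Icc 1 k, ∑ j ∈ range (k - i + 1), f (i + j) / ((i + j : ℕ) : K) = ∑ m ∈ Icc 1 k, f m := by
  have hreindex : ∀ i ∈ Icc 1 k,
      ∑ j ∈ range (k - i + 1), f (i + j) / ((i + j : ℕ) : K) = ∑ m ∈ Icc i k, f m / m := by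
    intro i hi
    have hik := (mem_Icc.mp hi).2
    rw [← Ico_add_one_right_eq_Icc, sum_Ico_eq_sum_range, show k + 1 - i = k - i + 1 by omega]
  rw [sum_congr rfl hreindex, sum_comm' (t' := Icc 1 k) (s' := fun m => Icc 1 m)
    (fun i m => by simp only [mem_Icc]; omega)]
  refine sum_congr rfl fun m hm => ?_
  have hm0 : (m : K) ≠ 0 := Nat.cast_ne_zero.mpr (by have := (mem_Icc.mp hm).1; omega)
  rw [sum_const, Nat.card_Icc, Nat.add_sub_cancel, nsmul_eq_mul]
  field_simp

theorem sum_Icc_add_tsum_nat_add {f : ℕ → ℝ} (hf : Summable f) (k : ℕ) :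
    ∑ m ∈ Icc 1 k, f m + ∑' j, f (j + (k + 1)) = ∑' j, f j - f 0 := by
  rw [← hf.sum_add_tsum_nat_add (k + 1), sum_range_succ', ← Ico_add_one_right_eq_Icc,
    sum_Ico_eq_sum_range, Nat.add_sub_cancel]
  simp only [add_comm 1]
  ring

theorem stmt_2 (η : ℝ) (hη : 0 < η) (k : ℕ) (hk : 1 ≤ k) (h : ℝ) :
    h * ∑ i ∈ Finset.Icc 1 k,
          ((1 / (k : ℝ)) * (∑' j : ℕ, Pcell η (j + (k + 1))) +
            ∑ j ∈ Finset.range (k - i + 1), Pcell η (i + j) / ((i + j : ℕ) : ℝ)) =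
      h * (1 - (1 + η / 3.5) ^ (-(3.5 : ℝ))) := by
  have hk0 : (k : ℝ) ≠ 0 := Nat.cast_ne_zero.mpr (by omega)
  rw [sum_add_distrib, sum_const, Nat.card_Icc, Nat.add_sub_cancel, nsmul_eq_mul,
    ← mul_assoc, mul_one_div_cancel hk0, one_mul, sum_Icc_sum_range_div_eq, add_comm,
    sum_Icc_add_tsum_nat_add (hasSum_Pcell hη).summable, (hasSum_Pcell hη).tsum_eq, Pcell_zero hη]
end

section
/- For all integers 1 ≤ i ≤ k, lim_{η → ∞} [ (1/k) · Σ_{j=k+1}^∞ P_η(j) + Σ_{j=0}^{k−i} P_η(i+j)/(i+j) ] = 1/k. Consequently, for every h ∈ [0,1], the probability h · [ (1/k) · Σ_{j=k+1}^∞ P_η(j) + Σ_{j=0}^{k−i} P_η(i+j)/(i+j) ] tends to h/k as η → ∞. -/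
open MeasureTheory ProbabilityTheory Real Filter Topology
open scoped NNReal ENNReal Nat

/-- The mass function of the negative binomial law with shape `a` and success probability
`η / (η + b)`. -/
noncomputable def gammaPoissonMass (a b η : ℝ) (j : ℕ) : ℝ :=
  b ^ a * Gamma (j + a) * η ^ j / (Gamma a * j ! * (η + b) ^ ((j : ℝ) + a))

section GammaPoisson

variable {a b η : ℝ}

lemma gammaPoissonMass_nonneg (ha : 0 < a) (hb : 0 ≤ b) (hη : 0 ≤ η) (j : ℕ) :
    0 ≤ gammaPoissonMass a b η j := by
  have := Gamma_pos_of_pos ha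
  have := Gamma_pos_of_pos (s := j + a) (by positivity)
  unfold gammaPoissonMass
  positivity

lemma tsum_poissonMeasure_singleton (r : ℝ≥0) : ∑' n, poissonMeasure r {n} = 1 := by
  simp_rw [poissonMeasure_singleton]
  rw [← ENNReal.ofReal_tsum_of_nonneg (fun _ ↦ by positivity)
    (hasSum_one_poissonMeasure r).summable, (hasSum_one_poissonMeasure r).tsum_eq,
    ENNReal.ofReal_one]

lemma gammaPDF_mul_poissonMeasure_singleton (ha : 0 < a) (hb : 0 < b) (hη : 0 ≤ η) (j : ℕ)
    {x : ℝ} (hx : x ≠ 0) :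
    gammaPDF a b x * poissonMeasure (η * x).toNNReal {j} =
      ENNReal.ofReal (gammaPoissonMass a b η j) * gammaPDF (j + a) (η + b) x := by
  rcases hx.lt_or_gt with hx | hx
  · simp [gammaPDF_of_neg hx]
  have hΓ := (Gamma_pos_of_pos ha).ne'
  have hΓj := (Gamma_pos_of_pos (s := j + a) (by positivity)).ne'
  have hηb : 0 < η + b := by positivity
  rw [gammaPDF_of_nonneg hx.le, gammaPDF_of_nonneg hx.le, poissonMeasure_singleton,
    ← ENNReal.ofReal_mul (by positivity),
    ← ENNReal.ofReal_mul (gammaPoissonMass_nonneg ha hb.le hη j)]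
  congr 1
  rw [Real.coe_toNNReal _ (by positivity), gammaPoissonMass,
    show (j : ℝ) + a - 1 = a - 1 + j by ring, rpow_add_natCast hx.ne',
    show (j : ℝ) + a = a + j by ring, rpow_add_natCast hηb.ne',
    show -((η + b) * x) = -(b * x) + -(η * x) by ring, exp_add]
  field_simp
  ring

lemma ofReal_gammaPoissonMass_eq_lintegral (ha : 0 < a) (hb : 0 < b) (hη : 0 ≤ η) (j : ℕ) :
    ENNReal.ofReal (gammaPoissonMass a b η j) =
      ∫⁻ x, gammaPDF a b x * poissonMeasure (η * x).toNNReal {j} := by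
  have hne : ∀ᵐ x : ℝ, x ≠ 0 := (Set.countable_singleton 0).ae_notMem volume
  rw [lintegral_congr_ae (hne.mono fun x hx ↦ gammaPDF_mul_poissonMeasure_singleton ha hb hη j hx),
    lintegral_const_mul' _ _ ENNReal.ofReal_ne_top,
    lintegral_gammaPDF_eq_one (by positivity) (by positivity), mul_one]

lemma hasSum_gammaPoissonMass (ha : 0 < a) (hb : 0 < b) (hη : 0 ≤ η) :
    HasSum (gammaPoissonMass a b η) 1 := by
  have htotal : ∑' j, ENNReal.ofReal (gammaPoissonMass a b η j) = 1 := by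
    simp_rw [ofReal_gammaPoissonMass_eq_lintegral ha hb hη]
    rw [← lintegral_tsum fun j ↦ ?_]
    · simp_rw [ENNReal.tsum_mul_left, tsum_poissonMeasure_singleton, mul_one]
      exact lintegral_gammaPDF_eq_one ha hb
    simp_rw [poissonMeasure_singleton, gammaPDF]
    fun_prop
  have hsum := ENNReal.hasSum_toReal (htotal ▸ ENNReal.one_ne_top)
  rw [← ENNReal.tsum_toReal_eq fun _ ↦ ENNReal.ofReal_ne_top, htotal, ENNReal.toReal_one] at hsum
  simpa only [ENNReal.toReal_ofReal (gammaPoissonMass_nonneg ha hb.le hη _)] using hsum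

lemma gammaPoissonMass_eq_mul_div_rpow (hηb : 0 < η + b) (j : ℕ) :
    gammaPoissonMass a b η j =
      b ^ a * Gamma (j + a) / (Gamma a * j !) * (η / (η + b)) ^ j / (η + b) ^ a := by
  rw [gammaPoissonMass, show (j : ℝ) + a = a + j by ring, rpow_add_natCast hηb.ne', div_pow]
  field_simp

lemma tendsto_gammaPoissonMass_atTop (ha : 0 < a) (hb : 0 < b) (j : ℕ) :
    Tendsto (fun η ↦ gammaPoissonMass a b η j) atTop (𝓝 0) := by
  set C := b ^ a * Gamma (j + a) / (Gamma a * j !)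
  have hC : 0 ≤ C := by
    have := Gamma_pos_of_pos ha
    have := Gamma_pos_of_pos (s := j + a) (by positivity)
    positivity
  have hdecay : Tendsto (fun η ↦ C / (η + b) ^ a) atTop (𝓝 0) :=
    tendsto_const_nhds.div_atTop <|
      (tendsto_rpow_atTop ha).comp (tendsto_atTop_add_const_right _ b tendsto_id)
  refine squeeze_zero' ?_ ?_ hdecay <;> filter_upwards [eventually_ge_atTop 0] with η hη
  · exact gammaPoissonMass_nonneg ha hb.le hη j
  have hηb : 0 < η + b := by positivity
  calc gammaPoissonMass a b η j = C * (η / (η + b)) ^ j / (η + b) ^ a :=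
        gammaPoissonMass_eq_mul_div_rpow hηb j
    _ ≤ C * 1 / (η + b) ^ a := by
        gcongr
        exact pow_le_one₀ (by positivity) (div_le_one_of_le₀ (by linarith) hηb.le)
    _ = C / (η + b) ^ a := by rw [mul_one]

end GammaPoisson

lemma Pcell_eq_gammaPoissonMass : Pcell = gammaPoissonMass 3.5 3.5 := rfl

lemma tendsto_tsum_nat_add_of_hasSum_one {α : Type*} {l : Filter α} {f : α → ℕ → ℝ}
    (hsum : ∀ᶠ x in l, HasSum (f x) 1) (hf : ∀ j, Tendsto (fun x ↦ f x j) l (𝓝 0)) (n : ℕ) :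
    Tendsto (fun x ↦ ∑' j, f x (j + n)) l (𝓝 1) := by
  have hhead : Tendsto (fun x ↦ 1 - ∑ j ∈ Finset.range n, f x j) l (𝓝 1) := by
    simpa only [Finset.sum_const_zero, sub_zero] using
      tendsto_const_nhds.sub (tendsto_finsetSum _ fun j _ ↦ hf j)
  refine hhead.congr' ?_
  filter_upwards [hsum] with x hx
  rw [← hx.tsum_eq, ← hx.summable.sum_add_tsum_nat_add n, add_sub_cancel_left]

theorem stmt_5_general (i k : ℕ) :
    Filter.Tendsto
      (fun η : ℝ =>
        (1 / (k : ℝ)) * (∑' j : ℕ, Pcell η (j + (k + 1))) +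
          ∑ j ∈ Finset.range (k - i + 1), Pcell η (i + j) / ((i + j : ℕ) : ℝ))
      Filter.atTop (nhds (1 / (k : ℝ))) ∧
    ∀ h : ℝ, 0 ≤ h → h ≤ 1 →
      Filter.Tendsto
        (fun η : ℝ =>
          h * ((1 / (k : ℝ)) * (∑' j : ℕ, Pcell η (j + (k + 1))) +
            ∑ j ∈ Finset.range (k - i + 1), Pcell η (i + j) / ((i + j : ℕ) : ℝ)))
        Filter.atTop (nhds (h / (k : ℝ))) := by
  rw [Pcell_eq_gammaPoissonMass]
  have hmass (j : ℕ) : Tendsto (fun η ↦ gammaPoissonMass 3.5 3.5 η j) atTop (𝓝 0) :=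
    tendsto_gammaPoissonMass_atTop (by norm_num) (by norm_num) j
  have htail : Tendsto (fun η ↦ ∑' j, gammaPoissonMass 3.5 3.5 η (j + (k + 1))) atTop (𝓝 1) :=
    tendsto_tsum_nat_add_of_hasSum_one ((eventually_ge_atTop 0).mono fun _ hη ↦
      hasSum_gammaPoissonMass (by norm_num) (by norm_num) hη) hmass (k + 1)
  have hhead : Tendsto (fun η ↦ ∑ j ∈ Finset.range (k - i + 1),
      gammaPoissonMass 3.5 3.5 η (i + j) / ((i + j : ℕ) : ℝ)) atTop (𝓝 0) := by
    simpa only [zero_div, Finset.sum_const_zero] using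
      tendsto_finsetSum _ fun j _ ↦ (hmass (i + j)).div_const ((i + j : ℕ) : ℝ)
  have hlim := (htail.const_mul (1 / (k : ℝ))).add hhead
  rw [mul_one, add_zero] at hlim
  exact ⟨hlim, fun h _ _ ↦ by simpa only [mul_one_div] using hlim.const_mul h⟩

theorem stmt_5 (i k : ℕ) (hi : 1 ≤ i) (hik : i ≤ k) :
    Filter.Tendsto
      (fun η : ℝ =>
        (1 / (k : ℝ)) * (∑' j : ℕ, Pcell η (j + (k + 1))) +
          ∑ j ∈ Finset.range (k - i + 1), Pcell η (i + j) / ((i + j : ℕ) : ℝ))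
      Filter.atTop (nhds (1 / (k : ℝ))) ∧
    ∀ h : ℝ, 0 ≤ h → h ≤ 1 →
      Filter.Tendsto
        (fun η : ℝ =>
          h * ((1 / (k : ℝ)) * (∑' j : ℕ, Pcell η (j + (k + 1))) +
            ∑ j ∈ Finset.range (k - i + 1), Pcell η (i + j) / ((i + j : ℕ) : ℝ)))
        Filter.atTop (nhds (h / (k : ℝ))) :=
  stmt_5_general i k
end

section
/- For every real λ > 0, ∫_0^∞ ( ∫_y^∞ 8λπ x · exp(−4λπ x²) dx ) · 2λπ y · exp(−λπ y²) dy = 1/5. In particular the value is independent of λ. -/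
/-!
The inner integral is an exact tail, `∫_y^∞ 2a x e^{-a x²} dx = e^{-a y²}` (antiderivative
`-e^{-a x²}`), so the outer integrand is `e^{-a y²} · 2b y e^{-b y²} = b/(a+b) · 2(a+b) y e^{-(a+b) y²}`
and the outer integral is `b / (a + b)`. With `a = 4λπ`, `b = λπ` this is `1/5`.
-/

open Real MeasureTheory

lemma hasDerivAt_neg_exp_neg_mul_sq (c x : ℝ) :
    HasDerivAt (fun x : ℝ => -exp (-(c * x ^ 2))) (2 * c * x * exp (-(c * x ^ 2))) x := by
  have hinner : HasDerivAt (fun x : ℝ => -(c * x ^ 2)) (-(c * (2 * x))) x := by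
    simpa using ((hasDerivAt_pow 2 x).const_mul c).fun_neg
  exact hinner.exp.fun_neg.congr_deriv (by ring)

lemma integral_Ioi_mul_exp_neg_mul_sq {c : ℝ} (hc : 0 < c) (a : ℝ) :
    ∫ x in Set.Ioi a, 2 * c * x * exp (-(c * x ^ 2)) = exp (-(c * a ^ 2)) := by
  have hint : IntegrableOn (fun x => 2 * c * x * exp (-(c * x ^ 2))) (Set.Ioi a) := by
    refine ((integrable_mul_exp_neg_mul_sq hc).const_mul (2 * c)).integrableOn.congr_fun
      (fun x _ => ?_) measurableSet_Ioi
    simp only [neg_mul, mul_assoc]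
  have htend : Filter.Tendsto (fun x : ℝ => -exp (-(c * x ^ 2))) Filter.atTop (nhds 0) := by
    have hsq := (Filter.tendsto_pow_atTop two_ne_zero).const_mul_atTop hc
    simpa using (tendsto_exp_atBot.comp (Filter.tendsto_neg_atTop_atBot.comp hsq)).neg
  rw [integral_Ioi_of_hasDerivAt_of_tendsto' (fun x _ => hasDerivAt_neg_exp_neg_mul_sq c x)
    hint htend]
  ring

/-- `P[X ≥ Y]` for independent Rayleigh variables with `P[X ≥ y] = e^{-a y²}`, `P[Y ≥ y] = e^{-b y²}`. -/
lemma integral_Ioi_rayleigh_tail_mul_pdf {a b : ℝ} (ha : 0 < a) (hb : 0 < b) :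
    ∫ y in Set.Ioi (0 : ℝ), exp (-(a * y ^ 2)) * (2 * b * y * exp (-(b * y ^ 2)))
      = b / (a + b) := by
  have hab : 0 < a + b := add_pos ha hb
  have hcomb : ∀ y : ℝ, exp (-(a * y ^ 2)) * (2 * b * y * exp (-(b * y ^ 2)))
      = b / (a + b) * (2 * (a + b) * y * exp (-((a + b) * y ^ 2))) := by
    intro y
    rw [show -((a + b) * y ^ 2) = -(a * y ^ 2) + -(b * y ^ 2) by ring, exp_add]
    field_simp
  simp_rw [hcomb]
  rw [integral_const_mul, integral_Ioi_mul_exp_neg_mul_sq hab]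
  simp

theorem stmt_6 (l : ℝ) (hl : 0 < l) :
    ∫ y in Set.Ioi (0 : ℝ),
        (∫ x in Set.Ioi y, 8 * l * π * x * Real.exp (-(4 * l * π * x ^ 2))) *
          (2 * l * π * y * Real.exp (-(l * π * y ^ 2))) = 1 / 5 := by
  have hlπ : 0 < l * π := by positivity
  have hinner : ∀ y : ℝ, ∫ x in Set.Ioi y, 8 * l * π * x * exp (-(4 * l * π * x ^ 2))
      = exp (-(4 * (l * π) * y ^ 2)) := by
    intro y
    rw [← integral_Ioi_mul_exp_neg_mul_sq (by positivity : 0 < 4 * (l * π)) y]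
    congr 1 with x
    ring_nf
  calc _ = ∫ y in Set.Ioi (0 : ℝ),
          exp (-(4 * (l * π) * y ^ 2)) * (2 * (l * π) * y * exp (-(l * π * y ^ 2))) := by
        congr 1 with y
        rw [hinner]
        ring_nf
    _ = l * π / (4 * (l * π) + l * π) :=
        integral_Ioi_rayleigh_tail_mul_pdf (by positivity) hlπ
    _ = 1 / 5 := by field_simp; ring
end

section
/- For all reals λ_m > 0, λ_d > 0 with η = λ_d/λ_m, and every integer i ≥ 1, ∫_0^∞ 2λ_mπ y · exp(−λ_mπ y²) · ( ∫_y^∞ [ 1 − exp(−λ_dπ x²) · Σ_{j=0}^{i−1} (λ_dπ x²)^j / j! ] · 8λ_mπ x · exp(−4λ_mπ x²) · (1 − exp(−λ_mπ x²)) dx ) dy = (1/5) · [ 5·(1 + 4/η)^(−i) + (10/3)·(1 + 6/η)^(−i) − 8·(1 + 5/η)^(−i) ]. -/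
/-!
Write `a = λ_m π`, `c = λ_d π`. Exchanging the two integrals turns the inner integral over `y`
into the distribution function `1 - exp (-a x²)`, and `(1 - exp (-a x²))² exp (-4 a x²)`
expands as `exp (-4 a x²) - 2 exp (-5 a x²) + exp (-6 a x²)`. So everything reduces to
`∫₀^∞ x exp (-b x²) P(Poisson(c x²) ≥ i) dx = (c / (b + c))^i / (2 b)`, which follows by induction
on `i`: removing the last Poisson term costs the Gaussian moment `c^i / (2 (b + c)^(i+1))`.
-/

open Real MeasureTheory Set

noncomputable def poissonTail (μ : ℝ) (i : ℕ) : ℝ :=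
  1 - exp (-μ) * ∑ j ∈ Finset.range i, μ ^ j / (Nat.factorial j : ℝ)

lemma poissonTail_zero (μ : ℝ) : poissonTail μ 0 = 1 := by
  simp [poissonTail]

lemma poissonTail_succ (μ : ℝ) (i : ℕ) :
    poissonTail μ (i + 1) = poissonTail μ i - exp (-μ) * (μ ^ i / (Nat.factorial i : ℝ)) := by
  simp only [poissonTail, Finset.sum_range_succ]
  ring

lemma integrableOn_pow_mul_exp_neg_mul_sq {b : ℝ} (hb : 0 < b) (n : ℕ) :
    IntegrableOn (fun x : ℝ => x ^ n * exp (-(b * x ^ 2))) (Ioi 0) := by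
  simpa [neg_mul] using
    integrableOn_rpow_mul_exp_neg_mul_sq hb (s := n) (neg_one_lt_zero.trans_le n.cast_nonneg)

lemma integral_pow_mul_exp_neg_mul_sq {b : ℝ} (hb : 0 < b) (n : ℕ) :
    ∫ x in Ioi (0 : ℝ), x ^ (2 * n + 1) * exp (-(b * x ^ 2)) =
      (Nat.factorial n : ℝ) / (2 * b ^ (n + 1)) := by
  have h := integral_rpow_mul_exp_neg_mul_rpow two_pos
    (neg_one_lt_zero.trans_le (2 * n + 1).cast_nonneg) hb
  have hexp : (((2 * n + 1 : ℕ) : ℝ) + 1) / 2 = n + 1 := by push_cast; ring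
  rw [neg_div, hexp, Real.Gamma_nat_eq_factorial, Real.rpow_neg hb.le,
    ← Nat.cast_add_one, Real.rpow_natCast] at h
  simp only [Real.rpow_natCast, Real.rpow_two, neg_mul] at h
  rw [h]
  field_simp

lemma mul_exp_neg_mul_sq_mul_poissonTail_succ (b c x : ℝ) (i : ℕ) :
    x * exp (-(b * x ^ 2)) * poissonTail (c * x ^ 2) (i + 1) =
      x * exp (-(b * x ^ 2)) * poissonTail (c * x ^ 2) i -
        c ^ i / (Nat.factorial i : ℝ) * (x ^ (2 * i + 1) * exp (-((b + c) * x ^ 2))) := by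
  rw [poissonTail_succ, show -((b + c) * x ^ 2) = -(b * x ^ 2) + -(c * x ^ 2) by ring, exp_add]
  ring

lemma integrableOn_mul_exp_neg_mul_sq_mul_poissonTail {b c : ℝ} (hb : 0 < b) (hbc : 0 < b + c)
    (i : ℕ) :
    IntegrableOn (fun x : ℝ => x * exp (-(b * x ^ 2)) * poissonTail (c * x ^ 2) i) (Ioi 0) := by
  induction i with
  | zero => simpa [poissonTail_zero] using integrableOn_pow_mul_exp_neg_mul_sq hb 1
  | succ i ih =>
    simp_rw [mul_exp_neg_mul_sq_mul_poissonTail_succ]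
    exact ih.sub ((integrableOn_pow_mul_exp_neg_mul_sq hbc _).const_mul _)

lemma integral_mul_exp_neg_mul_sq_mul_poissonTail {b c : ℝ} (hb : 0 < b) (hbc : 0 < b + c)
    (i : ℕ) :
    ∫ x in Ioi (0 : ℝ), x * exp (-(b * x ^ 2)) * poissonTail (c * x ^ 2) i =
      (c / (b + c)) ^ i / (2 * b) := by
  induction i with
  | zero => simpa [poissonTail_zero] using integral_pow_mul_exp_neg_mul_sq hb 0
  | succ i ih =>
    simp_rw [mul_exp_neg_mul_sq_mul_poissonTail_succ]
    rw [integral_sub (integrableOn_mul_exp_neg_mul_sq_mul_poissonTail hb hbc i)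
      ((integrableOn_pow_mul_exp_neg_mul_sq hbc _).const_mul _), integral_const_mul, ih,
      integral_pow_mul_exp_neg_mul_sq hbc, div_pow, div_pow]
    field_simp
    ring

lemma setIntegral_mul_setIntegral_Ioi_swap {a : ℝ} {f g : ℝ → ℝ} (hg : IntegrableOn g (Ioi a))
    (hf : IntegrableOn f (Ioi a)) :
    ∫ y in Ioi a, g y * ∫ x in Ioi y, f x = ∫ x in Ioi a, (∫ y in Ioo a x, g y) * f x := by
  set F : ℝ × ℝ → ℝ := {p | p.1 < p.2}.indicator fun p => g p.1 * f p.2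
  have hF : Integrable F ((volume.restrict (Ioi a)).prod (volume.restrict (Ioi a))) :=
    (hg.mul_prod hf).indicator (measurableSet_lt measurable_fst measurable_snd)
  calc ∫ y in Ioi a, g y * ∫ x in Ioi y, f x = ∫ y in Ioi a, ∫ x in Ioi a, F (y, x) := by
        refine setIntegral_congr_fun measurableSet_Ioi fun y (hy : a < y) => ?_
        have hFy : (fun x => F (y, x)) = (Ioi y).indicator fun x => g y * f x := by
          ext x; simp [F, indicator_apply]
        simp only [hFy, integral_indicator measurableSet_Ioi,
          Measure.restrict_restrict measurableSet_Ioi, Ioi_inter_Ioi, max_eq_left hy.le,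
          integral_const_mul]
    _ = ∫ x in Ioi a, ∫ y in Ioi a, F (y, x) := integral_integral_swap hF
    _ = ∫ x in Ioi a, (∫ y in Ioo a x, g y) * f x := by
        refine setIntegral_congr_fun measurableSet_Ioi fun x _ => ?_
        have hFx : (fun y => F (y, x)) = (Iio x).indicator fun y => g y * f x := by
          ext y; simp [F, indicator_apply]
        simp only [hFx, integral_indicator measurableSet_Iio,
          Measure.restrict_restrict measurableSet_Iio, Iio_inter_Ioi, integral_mul_const]

lemma setIntegral_Ioo_two_mul_mul_exp_neg_mul_sq (a : ℝ) {x : ℝ} (hx : 0 ≤ x) :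
    ∫ y in Ioo 0 x, 2 * a * y * exp (-(a * y ^ 2)) = 1 - exp (-(a * x ^ 2)) := by
  have hderiv (y : ℝ) :
      HasDerivAt (fun t => -exp (-(a * t ^ 2))) (2 * a * y * exp (-(a * y ^ 2))) y := by
    refine ((((hasDerivAt_pow 2 y).const_mul a).fun_neg.exp).fun_neg).congr_deriv ?_
    push_cast
    ring
  rw [← integral_Ioc_eq_integral_Ioo, ← intervalIntegral.integral_of_le hx,
    intervalIntegral.integral_eq_sub_of_hasDerivAt (fun y _ => hderiv y)
      ((by fun_prop : Continuous _).intervalIntegrable _ _), zero_pow two_ne_zero, mul_zero,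
    neg_zero, exp_zero]
  ring

lemma integral_rayleigh_mul_integral_Ioi_poissonTail {a c : ℝ} (ha : 0 < a) (hc : 0 ≤ c)
    (i : ℕ) :
    ∫ y in Ioi (0 : ℝ), 2 * a * y * exp (-(a * y ^ 2)) *
        ∫ x in Ioi y, poissonTail (c * x ^ 2) i * (8 * a * x * exp (-(4 * a * x ^ 2))) *
          (1 - exp (-(a * x ^ 2))) =
      (c / (4 * a + c)) ^ i - 8 / 5 * (c / (5 * a + c)) ^ i + 2 / 3 * (c / (6 * a + c)) ^ i := by
  set T : ℝ → ℝ → ℝ := fun b x => x * exp (-(b * x ^ 2)) * poissonTail (c * x ^ 2) i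
    with hT_def
  have hT {k : ℝ} (hk : 0 < k) : IntegrableOn (T (k * a)) (Ioi 0) :=
    integrableOn_mul_exp_neg_mul_sq_mul_poissonTail (by positivity) (by positivity) i
  have hT4 := hT (k := 4) (by norm_num)
  have hT5 := hT (k := 5) (by norm_num)
  have hT6 := hT (k := 6) (by norm_num)
  have hpow (k : ℕ) (x : ℝ) : exp (-(k * a * x ^ 2)) = exp (-(a * x ^ 2)) ^ k := by
    rw [← exp_nat_mul]; ring_nf
  have h4 x := hpow 4 x
  have h5 x := hpow 5 x
  have h6 x := hpow 6 x
  push_cast at h4 h5 h6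
  have hf : (fun x => poissonTail (c * x ^ 2) i * (8 * a * x * exp (-(4 * a * x ^ 2))) *
      (1 - exp (-(a * x ^ 2)))) = fun x => 8 * a * (T (4 * a) x - T (5 * a) x) := by
    ext x
    simp only [hT_def, h4, h5]
    ring
  have hg : IntegrableOn (fun y => 2 * a * y * exp (-(a * y ^ 2))) (Ioi 0) := by
    exact IntegrableOn.congr_fun ((integrableOn_pow_mul_exp_neg_mul_sq ha 1).const_mul (2 * a))
      (fun y _ => by ring) measurableSet_Ioi
  calc _ = ∫ x in Ioi (0 : ℝ), (∫ y in Ioo 0 x, 2 * a * y * exp (-(a * y ^ 2))) *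
          (poissonTail (c * x ^ 2) i * (8 * a * x * exp (-(4 * a * x ^ 2))) *
            (1 - exp (-(a * x ^ 2)))) :=
        setIntegral_mul_setIntegral_Ioi_swap hg (hf ▸ (hT4.sub hT5).const_mul _)
    _ = ∫ x in Ioi (0 : ℝ), 8 * a * (T (4 * a) x - 2 * T (5 * a) x + T (6 * a) x) := by
        refine setIntegral_congr_fun measurableSet_Ioi fun x hx => ?_
        rw [setIntegral_Ioo_two_mul_mul_exp_neg_mul_sq a (le_of_lt hx)]
        simp only [hT_def, h4, h5, h6]
        ring
    _ = 8 * a * ((∫ x in Ioi (0 : ℝ), T (4 * a) x) - 2 * (∫ x in Ioi (0 : ℝ), T (5 * a) x) +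
          ∫ x in Ioi (0 : ℝ), T (6 * a) x) := by
        have h45 : IntegrableOn (fun x => T (4 * a) x - 2 * T (5 * a) x) (Ioi 0) :=
          hT4.sub (hT5.const_mul 2)
        rw [integral_const_mul, integral_add h45 hT6, integral_sub hT4 (hT5.const_mul 2),
          integral_const_mul]
    _ = _ := by
        simp only [hT_def]
        rw [integral_mul_exp_neg_mul_sq_mul_poissonTail,
          integral_mul_exp_neg_mul_sq_mul_poissonTail, integral_mul_exp_neg_mul_sq_mul_poissonTail]
        · field_simp
          ring
        all_goals positivity

lemma one_add_div_div_zpow_neg (k : ℝ) {a c : ℝ} (hc : c ≠ 0) (i : ℕ) :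
    (1 + k / (c / a)) ^ (-(i : ℤ)) = (c / (k * a + c)) ^ i := by
  rw [zpow_neg, zpow_natCast, ← inv_pow, div_div_eq_mul_div,
    show 1 + k * a / c = (k * a + c) / c by field_simp; ring, inv_div]

theorem stmt_7_general (lm ld η : ℝ) (hlm : 0 < lm) (hld : 0 < ld) (hη : η = ld / lm)
    (i : ℕ) :
    ∫ y in Set.Ioi (0 : ℝ),
        2 * lm * π * y * Real.exp (-(lm * π * y ^ 2)) *
          (∫ x in Set.Ioi y,
            (1 - Real.exp (-(ld * π * x ^ 2)) *
                ∑ j ∈ Finset.range i, (ld * π * x ^ 2) ^ j / (Nat.factorial j : ℝ)) *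
              (8 * lm * π * x * Real.exp (-(4 * lm * π * x ^ 2))) *
              (1 - Real.exp (-(lm * π * x ^ 2)))) =
      (1 / 5) *
        (5 * (1 + 4 / η) ^ (-(i : ℤ)) + (10 / 3) * (1 + 6 / η) ^ (-(i : ℤ)) -
          8 * (1 + 5 / η) ^ (-(i : ℤ))) := by
  have hη' : η = ld * π / (lm * π) := by rw [hη, mul_div_mul_right _ _ pi_ne_zero]
  have hc : ld * π ≠ 0 := by positivity
  calc _ = ∫ y in Ioi (0 : ℝ), 2 * (lm * π) * y * exp (-(lm * π * y ^ 2)) *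
        ∫ x in Ioi y, poissonTail (ld * π * x ^ 2) i * (8 * (lm * π) * x *
          exp (-(4 * (lm * π) * x ^ 2))) * (1 - exp (-(lm * π * x ^ 2))) := by
        simp only [poissonTail, mul_assoc]
    _ = _ := integral_rayleigh_mul_integral_Ioi_poissonTail (by positivity) (by positivity) i
    _ = _ := by
        simp only [hη', one_add_div_div_zpow_neg _ hc]
        ring

theorem stmt_7 (lm ld η : ℝ) (hlm : 0 < lm) (hld : 0 < ld) (hη : η = ld / lm)
    (i : ℕ) (hi : 1 ≤ i) :
    ∫ y in Set.Ioi (0 : ℝ),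
        2 * lm * π * y * Real.exp (-(lm * π * y ^ 2)) *
          (∫ x in Set.Ioi y,
            (1 - Real.exp (-(ld * π * x ^ 2)) *
                ∑ j ∈ Finset.range i, (ld * π * x ^ 2) ^ j / (Nat.factorial j : ℝ)) *
              (8 * lm * π * x * Real.exp (-(4 * lm * π * x ^ 2))) *
              (1 - Real.exp (-(lm * π * x ^ 2)))) =
      (1 / 5) *
        (5 * (1 + 4 / η) ^ (-(i : ℤ)) + (10 / 3) * (1 + 6 / η) ^ (-(i : ℤ)) -
          8 * (1 + 5 / η) ^ (-(i : ℤ))) :=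
  stmt_7_general lm ld η hlm hld hη i
end

section
/- For all reals λ > 0 and r ≥ 0, setting b = λπr², ∫_0^∞ 2λπ y · exp(−λπ y²) · ( ∫_{r+y}^∞ 8λπ x · exp(−4λπ x²) · (1 − exp(−λπ x²)) dx ) dy = (1/5)·exp(−4b) − (2/15)·exp(−5b) + √(πb) · [ (√6/9)·exp(−5b/6)·erfc((5/6)·√(6b)) − (4√5/25)·exp(−4b/5)·erfc((4/5)·√(5b)) ], where erfc(z) = (2/√π)·∫_z^∞ exp(−t²) dt. -/
open Real MeasureTheory

/-- The complementary error function `erfc z = (2/√π) ∫_z^∞ exp(−t²) dt`. -/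
noncomputable def erfc (z : ℝ) : ℝ :=
  (2 / Real.sqrt π) * ∫ t in Set.Ioi z, Real.exp (-(t ^ 2))

/-!
With `a = λπ`, the inner integral has the elementary antiderivative of `x exp(-p x²)`, giving
`exp(-4a s²) - (4/5) exp(-5a s²)` at `s = r + y`. The outer integral is then a combination of
`∫_0^∞ y exp(-a y²) exp(-c (r + y)²) dy` for `c = 4a, 5a`. Completing the square and shifting
`u = y + c r / (a + c)` turns each into `∫_μ^∞ (u - μ) exp(-(a + c) u²) du`, whose first part is
again elementary and whose second part is a Gaussian tail, i.e. an `erfc` value.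
-/

open Set Filter Topology

lemma integral_Ioi_exp_neg_sq (z : ℝ) : ∫ t in Ioi z, exp (-t ^ 2) = √π / 2 * erfc z := by
  have : √π ≠ 0 := by positivity
  rw [erfc]
  field_simp

lemma integral_Ioi_exp_neg_mul_sq {k : ℝ} (hk : 0 < k) (s : ℝ) :
    ∫ x in Ioi s, exp (-k * x ^ 2) = √π / (2 * √k) * erfc (√k * s) := by
  have hk' : 0 < √k := sqrt_pos.2 hk
  calc ∫ x in Ioi s, exp (-k * x ^ 2) = ∫ x in Ioi s, exp (-(√k * x) ^ 2) := by
        simp only [mul_pow, sq_sqrt hk.le, neg_mul]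
    _ = (√k)⁻¹ * ∫ t in Ioi (√k * s), exp (-t ^ 2) :=
        integral_comp_mul_left_Ioi (fun t ↦ exp (-t ^ 2)) s hk'
    _ = √π / (2 * √k) * erfc (√k * s) := by
        rw [integral_Ioi_exp_neg_sq]
        field_simp

lemma tendsto_exp_neg_mul_sq_atTop {k : ℝ} (hk : 0 < k) :
    Tendsto (fun x : ℝ ↦ exp (-k * x ^ 2)) atTop (𝓝 0) := by
  refine tendsto_exp_atBot.comp ?_
  simpa only [neg_mul, Function.comp_def] using
    tendsto_neg_atTop_atBot.comp ((tendsto_pow_atTop two_ne_zero).const_mul_atTop hk)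

lemma integral_Ioi_mul_exp_neg_mul_sq_s11 {k : ℝ} (hk : 0 < k) (s : ℝ) :
    ∫ x in Ioi s, x * exp (-k * x ^ 2) = exp (-k * s ^ 2) / (2 * k) := by
  have hderiv (x : ℝ) :
      HasDerivAt (fun x ↦ -exp (-k * x ^ 2) / (2 * k)) (x * exp (-k * x ^ 2)) x := by
    refine ((((hasDerivAt_pow 2 x).const_mul (-k)).exp.neg).div_const (2 * k)).congr_deriv ?_
    field_simp
    ring
  have hlim := (tendsto_exp_neg_mul_sq_atTop hk).neg.div_const (2 * k)
  rw [integral_Ioi_of_hasDerivAt_of_tendsto' (fun x _ ↦ hderiv x)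
    (integrable_mul_exp_neg_mul_sq hk).integrableOn (by simpa using hlim)]
  ring

lemma integral_Ioi_mul_exp_neg_mul_sq_mul_one_sub_exp {p q : ℝ} (hp : 0 < p) (hpq : 0 < p + q)
    (s : ℝ) :
    ∫ x in Ioi s, x * exp (-p * x ^ 2) * (1 - exp (-q * x ^ 2)) =
      exp (-p * s ^ 2) / (2 * p) - exp (-(p + q) * s ^ 2) / (2 * (p + q)) := by
  have hsplit (x : ℝ) : x * exp (-p * x ^ 2) * (1 - exp (-q * x ^ 2)) =
      x * exp (-p * x ^ 2) - x * exp (-(p + q) * x ^ 2) := by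
    rw [neg_add, add_mul, exp_add]
    ring
  simp_rw [hsplit]
  rw [integral_sub (integrable_mul_exp_neg_mul_sq hp).integrableOn
    (integrable_mul_exp_neg_mul_sq hpq).integrableOn, integral_Ioi_mul_exp_neg_mul_sq_s11 hp,
    integral_Ioi_mul_exp_neg_mul_sq_s11 hpq]

lemma integral_Ioi_zero_mul_exp_neg_mul_add_sq {k : ℝ} (hk : 0 < k) (μ : ℝ) :
    ∫ y in Ioi 0, y * exp (-k * (y + μ) ^ 2) =
      exp (-k * μ ^ 2) / (2 * k) - μ * (√π / (2 * √k) * erfc (√k * μ)) := by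
  have hshift : ∫ y in Ioi 0, y * exp (-k * (y + μ) ^ 2) =
      ∫ u in Ioi μ, (u * exp (-k * u ^ 2) - μ * exp (-k * u ^ 2)) := by
    have := (measurePreserving_add_right volume μ).setIntegral_preimage_emb
      (measurableEmbedding_addRight μ) (fun u ↦ (u - μ) * exp (-k * u ^ 2)) (Ioi μ)
    simp only [preimage_add_const_Ioi, sub_self, add_sub_cancel_right] at this
    rw [this]
    simp_rw [sub_mul]
  rw [hshift, integral_sub (integrable_mul_exp_neg_mul_sq hk).integrableOn
    ((integrable_exp_neg_mul_sq hk).integrableOn.const_mul μ), integral_const_mul,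
    integral_Ioi_mul_exp_neg_mul_sq_s11 hk, integral_Ioi_exp_neg_mul_sq hk]

lemma integrable_mul_exp_neg_mul_sq_mul_exp_neg_mul_add_sq {a c : ℝ} (ha : 0 < a) (hc : 0 ≤ c)
    (r : ℝ) : Integrable (fun y ↦ y * exp (-a * y ^ 2) * exp (-c * (r + y) ^ 2)) := by
  refine (integrable_mul_exp_neg_mul_sq ha).mono (by fun_prop) (ae_of_all _ fun y ↦ ?_)
  have : exp (-c * (r + y) ^ 2) ≤ 1 := exp_le_one_iff.2 (by nlinarith [sq_nonneg (r + y)])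
  rw [norm_mul, norm_of_nonneg (exp_pos _).le]
  exact mul_le_of_le_one_right (norm_nonneg _) this

-- completing the square: `a y² + c (r + y)² = (a + c) (y + c r / (a + c))² + a c r² / (a + c)`
lemma integral_Ioi_zero_mul_exp_neg_mul_sq_mul_exp_neg_mul_add_sq {a c : ℝ} (hac : 0 < a + c)
    (r : ℝ) :
    ∫ y in Ioi 0, y * exp (-a * y ^ 2) * exp (-c * (r + y) ^ 2) =
      exp (-c * r ^ 2) / (2 * (a + c)) - exp (-(a * c / (a + c)) * r ^ 2) * (c * r / (a + c)) *
        (√π / (2 * √(a + c)) * erfc (√(a + c) * (c * r / (a + c)))) := by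
  have hsq (y : ℝ) : y * exp (-a * y ^ 2) * exp (-c * (r + y) ^ 2) =
      exp (-(a * c / (a + c)) * r ^ 2) * (y * exp (-(a + c) * (y + c * r / (a + c)) ^ 2)) := by
    rw [mul_assoc, ← exp_add, mul_left_comm, ← exp_add]
    congr 2
    field_simp
    ring
  simp_rw [hsq]
  rw [integral_const_mul, integral_Ioi_zero_mul_exp_neg_mul_add_sq hac, mul_sub, mul_div_assoc',
    ← exp_add]
  congr 1
  · congr 2
    field_simp
    ring
  · ring

lemma integral_Ioi_inradius_density_mul_distance_cdf {a : ℝ} (ha : 0 < a) (s : ℝ) :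
    ∫ x in Ioi s, 8 * a * x * exp (-(4 * a * x ^ 2)) * (1 - exp (-(a * x ^ 2))) =
      exp (-(4 * a) * s ^ 2) - 4 / 5 * exp (-(5 * a) * s ^ 2) := by
  calc _ = 8 * a * ∫ x in Ioi s, x * exp (-(4 * a) * x ^ 2) * (1 - exp (-a * x ^ 2)) := by
        rw [← integral_const_mul]
        simp only [neg_mul, mul_assoc]
    _ = _ := by
        rw [integral_Ioi_mul_exp_neg_mul_sq_mul_one_sub_exp (by positivity) (by positivity),
          show 4 * a + a = 5 * a by ring]
        field_simp
        ring

lemma integral_Ioi_distance_density_mul_inradius_tail {a : ℝ} (ha : 0 < a) (r : ℝ) :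
    ∫ y in Ioi 0, 2 * a * y * exp (-(a * y ^ 2)) *
        ∫ x in Ioi (r + y), 8 * a * x * exp (-(4 * a * x ^ 2)) * (1 - exp (-(a * x ^ 2))) =
      2 * a * (∫ y in Ioi 0, y * exp (-a * y ^ 2) * exp (-(4 * a) * (r + y) ^ 2)) -
        8 * a / 5 * ∫ y in Ioi 0, y * exp (-a * y ^ 2) * exp (-(5 * a) * (r + y) ^ 2) := by
  have hint (c : ℝ) (hc : 0 ≤ c) :=
    (integrable_mul_exp_neg_mul_sq_mul_exp_neg_mul_add_sq ha hc r).integrableOn (s := Ioi 0)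
  rw [← integral_const_mul, ← integral_const_mul,
    ← integral_sub ((hint _ (by positivity)).const_mul _) ((hint _ (by positivity)).const_mul _)]
  refine setIntegral_congr_fun measurableSet_Ioi fun y _ ↦ ?_
  simp only [integral_Ioi_inradius_density_mul_distance_cdf ha, neg_mul]
  ring

theorem stmt_11 (l r b : ℝ) (hl : 0 < l) (hr : 0 ≤ r) (hb : b = l * π * r ^ 2) :
    ∫ y in Set.Ioi (0 : ℝ),
        2 * l * π * y * Real.exp (-(l * π * y ^ 2)) *
          (∫ x in Set.Ioi (r + y),
            8 * l * π * x * Real.exp (-(4 * l * π * x ^ 2)) *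
              (1 - Real.exp (-(l * π * x ^ 2)))) =
      (1 / 5) * Real.exp (-(4 * b)) - (2 / 15) * Real.exp (-(5 * b)) +
        Real.sqrt (π * b) *
          ((Real.sqrt 6 / 9) * Real.exp (-(5 * b / 6)) * erfc ((5 / 6) * Real.sqrt (6 * b)) -
            (4 * Real.sqrt 5 / 25) * Real.exp (-(4 * b / 5)) *
              erfc ((4 / 5) * Real.sqrt (5 * b))) := by
  subst hb
  have ha : 0 < l * π := by positivity
  simp only [mul_assoc _ l π]
  generalize l * π = a at ha ⊢
  -- with `a = t²` every square root splits off as `√5`, `√6` or `√π` times `t` or `t r`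
  obtain ⟨t, ht, rfl⟩ : ∃ t, 0 < t ∧ a = t ^ 2 := ⟨√a, sqrt_pos.2 ha, (sq_sqrt ha.le).symm⟩
  have hsqrt {c : ℝ} (hc : 0 ≤ c) {x : ℝ} (hx : 0 ≤ x) : √(c * x ^ 2) = √c * x := by
    rw [sqrt_mul hc, sqrt_sq hx]
  have htr : 0 ≤ t * r := by positivity
  rw [integral_Ioi_distance_density_mul_inradius_tail ha,
    integral_Ioi_zero_mul_exp_neg_mul_sq_mul_exp_neg_mul_add_sq (by positivity),
    integral_Ioi_zero_mul_exp_neg_mul_sq_mul_exp_neg_mul_add_sq (by positivity),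
    show t ^ 2 + 4 * t ^ 2 = 5 * t ^ 2 by ring, show t ^ 2 + 5 * t ^ 2 = 6 * t ^ 2 by ring,
    show t ^ 2 * r ^ 2 = (t * r) ^ 2 by ring, hsqrt (by positivity) ht.le,
    hsqrt (by positivity) ht.le, hsqrt pi_pos.le htr, hsqrt (by positivity) htr,
    hsqrt (by positivity) htr,
    show √5 * t * (4 * t ^ 2 * r / (5 * t ^ 2)) = 4 / 5 * (√5 * (t * r)) by field_simp,
    show √6 * t * (5 * t ^ 2 * r / (6 * t ^ 2)) = 5 / 6 * (√6 * (t * r)) by field_simp,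
    show -(t ^ 2 * (4 * t ^ 2) / (5 * t ^ 2)) * r ^ 2 = -(4 * (t * r) ^ 2 / 5) by field_simp,
    show -(t ^ 2 * (5 * t ^ 2) / (6 * t ^ 2)) * r ^ 2 = -(5 * (t * r) ^ 2 / 6) by field_simp]
  field_simp
  ring_nf
  rw [sq_sqrt (by norm_num), sq_sqrt (by norm_num)]
  ring
end
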